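/- arXiv:1910.02871 — 7 statements merged into one kernel-verified Lean document; each statement's English description precedes it below -/
import Mathlib

section
/- For a stochastic reaction network G, the following are equivalent: (1) G is essential (the state space Z_{≥0}^n is a union of closed communicating classes); (2) for all x ∈ Z_{≥0}^n, either no reaction is active on x, or for every state x' accessible from x, x is also accessible from x'; (3) for every reaction ν → ν' ∈ R, the state ν is accessible from the state ν' under the dynamics of G. -/
/-- A reaction `ν → ν'` is active on `x` iff `ν ≤ x` componentwise. -/
def Active {σ : Type*} (ν x : σ → ℕ) : Prop := ∀ i, ν i ≤ x i

/-- One jump of the CTMC: firing an active reaction `ν → ν'` moves `x` to `x + ν' - ν`. -/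
def Step {σ : Type*} (R : Set ((σ → ℕ) × (σ → ℕ))) (x y : σ → ℕ) : Prop :=
  ∃ r ∈ R, Active r.1 x ∧ ∀ i, y i + r.1 i = x i + r.2 i

/-- `u` is accessible from `x` via a finite sequence of active reactions. -/
def Accessible {σ : Type*} (R : Set ((σ → ℕ) × (σ → ℕ))) : (σ → ℕ) → (σ → ℕ) → Prop :=
  Relation.ReflTransGen (Step R)

/-- An irreducible component (closed communicating class): a nonempty `Γ` such that for
`x ∈ Γ`, `u` is accessible from `x` iff `u ∈ Γ`. -/
def IsIrreducibleComponent {σ : Type*} (R : Set ((σ → ℕ) × (σ → ℕ)))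
    (Γ : Set (σ → ℕ)) : Prop :=
  Γ.Nonempty ∧ ∀ x ∈ Γ, ∀ u, Accessible R x u ↔ u ∈ Γ

/-- A network is essential if the whole state space is a union of closed communicating
classes. -/
def Essential {σ : Type*} (R : Set ((σ → ℕ) × (σ → ℕ))) : Prop :=
  ∀ x : σ → ℕ, ∃ Γ, IsIrreducibleComponent R Γ ∧ x ∈ Γ

/-!
All three conditions are equivalent to accessibility being symmetric. For (1) the closed
classes are then the sets `{u | x →_G u}`, and states where no reaction is active are
absorbing, so the first alternative in (2) is harmless. For (3), the dynamics are invariant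
under translation by any `c ≥ 0`; a jump `x → x + ν' - ν` is the jump `ν → ν'` translated by
`c = x - ν`, so it is undone by translating a path from `ν'` back to `ν`.
-/

section

variable {σ : Type*} {R : Set ((σ → ℕ) × (σ → ℕ))}

theorem Step.of_mem {r : (σ → ℕ) × (σ → ℕ)} (hr : r ∈ R) : Step R r.1 r.2 :=
  ⟨r, hr, fun _ => le_rfl, fun _ => add_comm _ _⟩

theorem Step.add_right {x y : σ → ℕ} (h : Step R x y) (c : σ → ℕ) :
    Step R (x + c) (y + c) := by
  obtain ⟨r, hr, hact, hxy⟩ := h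
  refine ⟨r, hr, fun i => (hact i).trans (Nat.le_add_right _ _), fun i => ?_⟩
  simp only [Pi.add_apply]
  linarith [hxy i]

theorem Accessible.add_right {x y : σ → ℕ} (h : Accessible R x y) (c : σ → ℕ) :
    Accessible R (x + c) (y + c) :=
  Relation.ReflTransGen.lift (· + c) (fun _ _ hxy => hxy.add_right c) x y h

theorem accessible_iff_eq_of_not_active {x u : σ → ℕ} (hx : ∀ r ∈ R, ¬ Active r.1 x) :
    Accessible R x u ↔ u = x :=
  Relation.reflTransGen_iff_eq fun _ ⟨r, hr, hact, _⟩ => hx r hr hact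

theorem essential_iff_accessible_symm :
    Essential R ↔ ∀ x y, Accessible R x y → Accessible R y x := by
  constructor
  · rintro hE x y hxy
    obtain ⟨Γ, ⟨-, hΓ⟩, hxΓ⟩ := hE x
    exact (hΓ y ((hΓ x hxΓ y).1 hxy) x).2 hxΓ
  · intro hsymm x
    refine ⟨{u | Accessible R x u}, ⟨⟨x, .refl⟩, fun y hy u => ⟨hy.trans, ?_⟩⟩, .refl⟩
    exact (hsymm x y hy).trans

theorem accessible_symm_iff_forall_inactive_or :
    (∀ x y, Accessible R x y → Accessible R y x) ↔
      ∀ x : σ → ℕ, (∀ r ∈ R, ¬ Active r.1 x) ∨ ∀ x', Accessible R x x' → Accessible R x' x := by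
  refine ⟨fun hsymm x => .inr (hsymm x), fun h x y hxy => ?_⟩
  rcases h x with hx | hrev
  · rw [(accessible_iff_eq_of_not_active hx).1 hxy]
    exact .refl
  · exact hrev y hxy

theorem accessible_symm_iff_forall_mem :
    (∀ x y, Accessible R x y → Accessible R y x) ↔ ∀ r ∈ R, Accessible R r.2 r.1 := by
  refine ⟨fun hsymm r hr => hsymm _ _ (.single (.of_mem hr)), fun hrev x y hxy => ?_⟩
  have step_reverse : ∀ a b, Step R a b → Accessible R b a := by
    rintro a b ⟨r, hr, hact, hab⟩
    convert (hrev r hr).add_right (a - r.1) using 1 <;> funext i <;>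
      simp only [Pi.add_apply, Pi.sub_apply] <;> linarith [hab i, Nat.add_sub_of_le (hact i)]
  induction hxy with
  | refl => exact .refl
  | tail _ hstep ih => exact (step_reverse _ _ hstep).trans ih

end

/-- the three characterizations of essentiality are equivalent. -/
theorem stmt1 {σ : Type*} (R : Set ((σ → ℕ) × (σ → ℕ))) :
    (Essential R ↔
      ∀ x : σ → ℕ, (∀ r ∈ R, ¬ Active r.1 x) ∨
        ∀ x', Accessible R x x' → Accessible R x' x) ∧
    (Essential R ↔ ∀ r ∈ R, Accessible R r.2 r.1) := by
  rw [essential_iff_accessible_symm]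
  exact ⟨accessible_symm_iff_forall_inactive_or, accessible_symm_iff_forall_mem⟩
end

section
/- Every weakly reversible reaction network is essential: if for each reaction ν → ν' there is a directed path in the reaction graph from ν' back to ν, then every state of Z_{≥0}^n lies in a closed communicating class of the mass-action CTMC. -/
open Relation

namespace ReactionNetwork

variable {σ : Type*} {R : Set ((σ → ℕ) × (σ → ℕ))}

variable (R) in
abbrev ReactionEdge (ν ν' : σ → ℕ) : Prop := (ν, ν') ∈ R

variable (R) in
def WeaklyReversible : Prop := ∀ r ∈ R, ReflTransGen (ReactionEdge R) r.2 r.1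

theorem step_iff {x y : σ → ℕ} : Step R x y ↔ ∃ r ∈ R, ∃ z, x = z + r.1 ∧ y = z + r.2 := by
  constructor
  · rintro ⟨r, hr, hact, heq⟩
    refine ⟨r, hr, x - r.1, funext fun i => ?_, funext fun i => ?_⟩ <;>
      simp only [Pi.add_apply, Pi.sub_apply] <;> have := hact i <;> have := heq i <;> omega
  · rintro ⟨r, hr, z, rfl, rfl⟩
    exact ⟨r, hr, fun i => Nat.le_add_left _ _, fun i => by simp only [Pi.add_apply]; omega⟩

theorem step_add {ν ν' : σ → ℕ} (h : (ν, ν') ∈ R) (z : σ → ℕ) : Step R (z + ν) (z + ν') :=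
  step_iff.mpr ⟨(ν, ν'), h, z, rfl, rfl⟩

theorem accessible_add_of_reflTransGen {ν ν' : σ → ℕ} (h : ReflTransGen (ReactionEdge R) ν ν')
    (z : σ → ℕ) : Accessible R (z + ν) (z + ν') :=
  h.lift (z + ·) fun _ _ hab => step_add hab z

theorem WeaklyReversible.accessible_of_step (hR : WeaklyReversible R) {x y : σ → ℕ}
    (h : Step R x y) : Accessible R y x := by
  obtain ⟨r, hr, z, rfl, rfl⟩ := step_iff.mp h
  exact accessible_add_of_reflTransGen (hR r hr) z

theorem WeaklyReversible.accessible_symm (hR : WeaklyReversible R) {x y : σ → ℕ}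
    (h : Accessible R x y) : Accessible R y x :=
  h.swap.lift' id fun _ _ hab => hR.accessible_of_step hab

theorem isIrreducibleComponent_setOf_accessible
    (hR : ∀ {x y}, Accessible R x y → Accessible R y x) (x : σ → ℕ) :
    IsIrreducibleComponent R {u | Accessible R x u} :=
  ⟨⟨x, .refl⟩, fun _ hy _ => ⟨hy.trans, (hR hy).trans⟩⟩

theorem essential_of_symmetric_accessible
    (hR : ∀ {x y}, Accessible R x y → Accessible R y x) : Essential R :=
  fun x => ⟨_, isIrreducibleComponent_setOf_accessible hR x, .refl⟩

end ReactionNetwork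

/-- every weakly reversible reaction network is essential. -/
theorem stmt2 {σ : Type*} (R : Set ((σ → ℕ) × (σ → ℕ)))
    (hwr : ∀ r ∈ R, Relation.ReflTransGen (fun a b : σ → ℕ => (a, b) ∈ R) r.2 r.1) :
    Essential R :=
  ReactionNetwork.essential_of_symmetric_accessible
    (ReactionNetwork.WeaklyReversible.accessible_symm hwr)
end

section
/- If G₁ and G₂ are both essential reaction networks, then their union G = G₁ ∪ G₂ is essential. -/
/-- Zero-padding embedding of a state on species `S` into the full species set. -/
def pad {ι : Type*} [DecidableEq ι] (S : Finset ι) (v : ↥S → ℕ) : ι → ℕ :=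
  fun i => if h : i ∈ S then v ⟨i, h⟩ else 0

/-- Coordinate projection onto the species of `S`. -/
def proj {ι : Type*} (S : Finset ι) (x : ι → ℕ) : ↥S → ℕ := fun i => x ↑i

/-- The reactions of a subnetwork on species `S`, embedded (by zero-padding) as reactions
on the full species set. -/
def padR {ι : Type*} [DecidableEq ι] (S : Finset ι) (R : Set ((↥S → ℕ) × (↥S → ℕ))) :
    Set ((ι → ℕ) × (ι → ℕ)) := (fun r => (pad S r.1, pad S r.2)) '' R

/-!
A network is essential exactly when accessibility is symmetric, equivalently when every single
reaction firing can be undone by some path. A firing of a zero-padded subnetwork changes only the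
subnetwork's own species, so if the subnetwork is essential the firing is undone by lifting a
reverse path of the subnetwork, which leaves the other species fixed. Every firing of the union
is a firing of one of the two padded networks, hence is undone inside that network.
-/

section Accessibility

variable {σ : Type*} {R R' : Set ((σ → ℕ) × (σ → ℕ))}

theorem Step.mono (hR : R ⊆ R') {x y : σ → ℕ} : Step R x y → Step R' x y :=
  fun ⟨r, hr, ha, he⟩ => ⟨r, hR hr, ha, he⟩

theorem Accessible.mono (hR : R ⊆ R') {x y : σ → ℕ} (h : Accessible R x y) :
    Accessible R' x y :=
  Relation.ReflTransGen.mono (fun _ _ => Step.mono hR) _ _ h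

theorem Essential.accessible_symm (hR : Essential R) {x y : σ → ℕ} (h : Accessible R x y) :
    Accessible R y x := by
  obtain ⟨Γ, ⟨-, hΓ⟩, hx⟩ := hR x
  exact (hΓ y ((hΓ x hx y).mp h) x).mpr hx

theorem essential_of_step_reversible (hR : ∀ x y, Step R x y → Accessible R y x) :
    Essential R := by
  have symm : ∀ x y, Accessible R x y → Accessible R y x := by
    intro x y h
    induction h with
    | refl => exact .refl
    | tail _ hstep ih => exact (hR _ _ hstep).trans ih
  refine fun x => ⟨{u | Accessible R x u}, ⟨⟨x, .refl⟩, fun z hz u => ?_⟩, .refl⟩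
  exact ⟨hz.trans, (symm x z hz).trans⟩

theorem Essential.union (hR : Essential R) (hR' : Essential R') : Essential (R ∪ R') := by
  refine essential_of_step_reversible fun x y ⟨r, hr, ha, he⟩ => ?_
  rcases hr with hr | hr
  · exact (hR.accessible_symm (.single ⟨r, hr, ha, he⟩)).mono Set.subset_union_left
  · exact (hR'.accessible_symm (.single ⟨r, hr, ha, he⟩)).mono Set.subset_union_right

end Accessibility

section Padding

variable {ι : Type*} [DecidableEq ι] {S : Finset ι} {R : Set ((↥S → ℕ) × (↥S → ℕ))}

theorem step_padR_iff {x y : ι → ℕ} :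
    Step (padR S R) x y ↔ Step R (proj S x) (proj S y) ∧ ∀ i ∉ S, y i = x i := by
  constructor
  · rintro ⟨-, ⟨r, hr, rfl⟩, ha, he⟩
    refine ⟨⟨r, hr, fun i => ?_, fun i => ?_⟩, fun i hi => ?_⟩
    · simpa [pad, proj] using ha i
    · simpa [pad, proj] using he i
    · simpa [pad, hi] using he i
  · rintro ⟨⟨r, hr, ha, he⟩, hoff⟩
    refine ⟨_, ⟨r, hr, rfl⟩, fun i => ?_, fun i => ?_⟩
    · by_cases hi : i ∈ S
      · simpa [pad, hi, proj] using ha ⟨i, hi⟩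
      · simp [pad, hi]
    · by_cases hi : i ∈ S
      · simpa [pad, hi, proj] using he ⟨i, hi⟩
      · simp [pad, hi, hoff i hi]

theorem Accessible.lift_padR {x : ι → ℕ} {w : ↥S → ℕ} (h : Accessible R (proj S x) w) :
    ∃ y, Accessible (padR S R) x y ∧ proj S y = w ∧ ∀ i ∉ S, y i = x i := by
  induction h with
  | refl => exact ⟨x, .refl, rfl, fun _ _ => rfl⟩
  | @tail _ w _ hstep ih =>
    obtain ⟨y, hxy, rfl, hoff⟩ := ih
    let y' : ι → ℕ := fun i => if hi : i ∈ S then w ⟨i, hi⟩ else y i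
    have hproj : proj S y' = w := funext fun i => by simp [y', proj]
    have hoff' : ∀ i ∉ S, y' i = y i := fun i hi => by simp [y', hi]
    refine ⟨y', hxy.tail (step_padR_iff.mpr ⟨hproj ▸ hstep, hoff'⟩), hproj, fun i hi => ?_⟩
    rw [hoff' i hi, hoff i hi]

theorem Essential.padR (hR : Essential R) : Essential (padR S R) := by
  refine essential_of_step_reversible fun x y hxy => ?_
  obtain ⟨hstep, hoff⟩ := step_padR_iff.mp hxy
  obtain ⟨z, hyz, hproj, hoff'⟩ := (hR.accessible_symm (.single hstep)).lift_padR
  have hzx : z = x := funext fun i => by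
    by_cases hi : i ∈ S
    · exact congrFun hproj ⟨i, hi⟩
    · rw [hoff' i hi, hoff i hi]
  exact hzx ▸ hyz

end Padding

theorem stmt4_general {ι : Type*} [DecidableEq ι] (S₁ S₂ : Finset ι)
    (R₁ : Set ((↥S₁ → ℕ) × (↥S₁ → ℕ))) (R₂ : Set ((↥S₂ → ℕ) × (↥S₂ → ℕ)))
    (h₁ : Essential R₁) (h₂ : Essential R₂) :
    Essential (padR S₁ R₁ ∪ padR S₂ R₂) :=
  h₁.padR.union h₂.padR

/-- the union of two essential reaction networks is essential. -/
theorem stmt4 {ι : Type*} [Fintype ι] [DecidableEq ι] (S₁ S₂ : Finset ι)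
    (hcov : S₁ ∪ S₂ = Finset.univ)
    (R₁ : Set ((↥S₁ → ℕ) × (↥S₁ → ℕ))) (R₂ : Set ((↥S₂ → ℕ) × (↥S₂ → ℕ)))
    (h₁ : Essential R₁) (h₂ : Essential R₂) :
    Essential (padR S₁ R₁ ∪ padR S₂ R₂) :=
  stmt4_general S₁ S₂ R₁ R₂ h₁ h₂
end

section
/- Let G = G₁ ∪ G₂ be a union of reaction networks, let Γ be an irreducible component of G, and suppose p₁(Γ) is a disjoint union of irreducible components of G₁. If x ∈ Γ and x' ∈ Z_{≥0}^{S₁∪S₂} are such that p₁(x') →_{G₁} p₁(x) but p₁(x) ↛_{G₁} p₁(x'), then x' ∉ Γ. -/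
theorem IsIrreducibleComponent.accessible_symm {σ : Type*} {R : Set ((σ → ℕ) × (σ → ℕ))}
    {C : Set (σ → ℕ)} (hC : IsIrreducibleComponent R C) {a b : σ → ℕ} (ha : a ∈ C)
    (hab : Accessible R a b) : Accessible R b a :=
  (hC.2 b ((hC.2 a ha b).1 hab) a).2 ha

theorem accessible_symm_of_mem_sUnion {σ : Type*} {R : Set ((σ → ℕ) × (σ → ℕ))}
    {𝒞 : Set (Set (σ → ℕ))} (h𝒞 : ∀ C ∈ 𝒞, IsIrreducibleComponent R C) {a b : σ → ℕ}
    (ha : a ∈ ⋃₀ 𝒞) (hab : Accessible R a b) : Accessible R b a := by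
  obtain ⟨C, hC𝒞, haC⟩ := ha
  exact (h𝒞 C hC𝒞).accessible_symm haC hab

theorem stmt5_general {ι : Type*} (S₁ : Finset ι)
    (R₁ : Set ((↥S₁ → ℕ) × (↥S₁ → ℕ)))
    (Γ : Set (ι → ℕ))
    (𝒞 : Set (Set (↥S₁ → ℕ))) (h𝒞 : ∀ C ∈ 𝒞, IsIrreducibleComponent R₁ C)
    (h𝒞cov : ⋃₀ 𝒞 = proj S₁ '' Γ)
    (x x' : ι → ℕ)
    (hacc : Accessible R₁ (proj S₁ x') (proj S₁ x))
    (hnacc : ¬ Accessible R₁ (proj S₁ x) (proj S₁ x')) :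
    x' ∉ Γ := by
  intro hx'
  have hmem : proj S₁ x' ∈ ⋃₀ 𝒞 := h𝒞cov ▸ Set.mem_image_of_mem _ hx'
  exact hnacc (accessible_symm_of_mem_sUnion h𝒞 hmem hacc)

/-- if `p₁(Γ)` is a disjoint union of irreducible components of `G₁`, and
`p₁(x') →_{G₁} p₁(x)` but not conversely for some `x ∈ Γ`, then `x' ∉ Γ`. -/
theorem stmt5 {ι : Type*} [Fintype ι] [DecidableEq ι] (S₁ S₂ : Finset ι)
    (hcov : S₁ ∪ S₂ = Finset.univ)
    (R₁ : Set ((↥S₁ → ℕ) × (↥S₁ → ℕ))) (R₂ : Set ((↥S₂ → ℕ) × (↥S₂ → ℕ)))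
    (Γ : Set (ι → ℕ)) (hΓ : IsIrreducibleComponent (padR S₁ R₁ ∪ padR S₂ R₂) Γ)
    (𝒞 : Set (Set (↥S₁ → ℕ))) (h𝒞 : ∀ C ∈ 𝒞, IsIrreducibleComponent R₁ C)
    (h𝒞disj : 𝒞.PairwiseDisjoint id) (h𝒞cov : ⋃₀ 𝒞 = proj S₁ '' Γ)
    (x x' : ι → ℕ) (hx : x ∈ Γ)
    (hacc : Accessible R₁ (proj S₁ x') (proj S₁ x))
    (hnacc : ¬ Accessible R₁ (proj S₁ x) (proj S₁ x')) :
    x' ∉ Γ :=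
  stmt5_general S₁ R₁ Γ 𝒞 h𝒞 h𝒞cov x x' hacc hnacc
end

section
/- Let G = G₁ ∪ G₂ with S₁ ∩ S₂ = ∅, let Γ = Γ₁ × Γ₂ be an irreducible component of G with Γᵢ an irreducible component of Gᵢ, and let π₁, π₂ be stationary distributions of G₁, G₂ on Γ₁, Γ₂. Then the product π(x) = π₁(p₁(x)) π₂(p₂(x)) is a stationary distribution of G on Γ, and it is generalized balanced with respect to the partition {(R₁,R₁),(R₂,R₂)}. -/
/-- One jump of the CTMC on the nonnegative orthant of `ℤ^σ`: from a nonnegative state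
`x`, an active reaction `ν → ν'` moves `x` to `x + ν' - ν`. -/
def StepZ {σ : Type*} (R : Finset ((σ → ℤ) × (σ → ℤ))) (x y : σ → ℤ) : Prop :=
  (∀ i, 0 ≤ x i) ∧ ∃ r ∈ R, (∀ i, r.1 i ≤ x i) ∧ y = x + r.2 - r.1

/-- Accessibility via finite sequences of active reactions. -/
def AccessibleZ {σ : Type*} (R : Finset ((σ → ℤ) × (σ → ℤ))) :
    (σ → ℤ) → (σ → ℤ) → Prop :=
  Relation.ReflTransGen (StepZ R)

/-- An irreducible component (closed communicating class). -/
def IsIrreducibleComponentZ {σ : Type*} (R : Finset ((σ → ℤ) × (σ → ℤ)))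
    (Γ : Set (σ → ℤ)) : Prop :=
  Γ.Nonempty ∧ ∀ x ∈ Γ, ∀ u, AccessibleZ R x u ↔ u ∈ Γ

/-- A network is essential if every state of the nonnegative orthant lies in a closed
communicating class. -/
def EssentialZ {σ : Type*} (R : Finset ((σ → ℤ) × (σ → ℤ))) : Prop :=
  ∀ x : σ → ℤ, (∀ i, 0 ≤ x i) → ∃ Γ, IsIrreducibleComponentZ R Γ ∧ x ∈ Γ

/-- The master (stationarity) equation for `π` on `Γ`, restricted to the reactions of
`R`. -/
def MasterEq {σ : Type*} (R : Finset ((σ → ℤ) × (σ → ℤ)))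
    (lam : ((σ → ℤ) × (σ → ℤ)) → (σ → ℤ) → ℝ) (Γ : Set (σ → ℤ))
    (π : (σ → ℤ) → ℝ) : Prop :=
  ∀ x ∈ Γ, ∑ r ∈ R, π (x + r.1 - r.2) * lam r (x + r.1 - r.2) = π x * ∑ r ∈ R, lam r x

/-- `π` is a stationary distribution of the network `R` on `Γ`. -/
def IsStationaryDist {σ : Type*} (R : Finset ((σ → ℤ) × (σ → ℤ)))
    (lam : ((σ → ℤ) × (σ → ℤ)) → (σ → ℤ) → ℝ) (Γ : Set (σ → ℤ))
    (π : (σ → ℤ) → ℝ) : Prop :=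
  (∀ z, 0 ≤ π z) ∧ (∀ z ∉ Γ, π z = 0) ∧ (∑' z : Γ, π ↑z = 1) ∧ MasterEq R lam Γ π

/-- Zero-padding embedding of a state on species `S` into the full species set. -/
def padZ {ι : Type*} [DecidableEq ι] (S : Finset ι) (v : ↥S → ℤ) : ι → ℤ :=
  fun i => if h : i ∈ S then v ⟨i, h⟩ else 0

/-- Coordinate projection onto the species of `S`. -/
def projZ {ι : Type*} (S : Finset ι) (x : ι → ℤ) : ↥S → ℤ := fun i => x ↑i

/-- The reactions of a subnetwork on species `S`, embedded by zero-padding. -/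
def padRZ {ι : Type*} [Fintype ι] [DecidableEq ι] (S : Finset ι)
    (R : Finset ((↥S → ℤ) × (↥S → ℤ))) : Finset ((ι → ℤ) × (ι → ℤ)) :=
  R.image (fun r => (padZ S r.1, padZ S r.2))

/-! The reactions of the two subnetworks move disjoint blocks of coordinates and their intensities
read only their own block, so a reaction of `R₁` leaves the `S₂`-block, and hence the factor `π₂`,
untouched. The master equation of the union restricted to `R₁` is therefore `π₂` times the master
equation of `π₁`, and symmetrically for `R₂`; the two add up to the master equation of the union,
the only reaction the padded networks can share being the trivial one `0 → 0`. Normalization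
holds because padding identifies `Γ` with `Γ₁ × Γ₂`, over which the sum of `π₁ ⊗ π₂` factors. -/

section Padding

variable {ι : Type*} [DecidableEq ι]

@[simp]
lemma projZ_padZ (S : Finset ι) (v : ↥S → ℤ) : projZ S (padZ S v) = v := by
  funext i
  simp [projZ, padZ]

lemma projZ_padZ_of_disjoint {S T : Finset ι} (h : Disjoint S T) (v : ↥T → ℤ) :
    projZ S (padZ T v) = 0 := by
  funext i
  simp [projZ, padZ, Finset.disjoint_left.mp h i.2]

@[simp]
lemma padZ_zero (S : Finset ι) : padZ S 0 = 0 := by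
  funext i
  simp [padZ]

omit [DecidableEq ι] in
@[simp]
lemma projZ_add (S : Finset ι) (x y : ι → ℤ) : projZ S (x + y) = projZ S x + projZ S y := rfl

omit [DecidableEq ι] in
@[simp]
lemma projZ_sub (S : Finset ι) (x y : ι → ℤ) : projZ S (x - y) = projZ S x - projZ S y := rfl

lemma padZ_injective (S : Finset ι) : Function.Injective (padZ S) :=
  Function.LeftInverse.injective (projZ_padZ S)

lemma eq_zero_of_padZ_eq_padZ {S T : Finset ι} (h : Disjoint S T) {u : ↥S → ℤ} {v : ↥T → ℤ}
    (huv : padZ S u = padZ T v) : u = 0 := by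
  simpa [projZ_padZ_of_disjoint h] using congrArg (projZ S) huv

lemma eq_zero_of_mem_padRZ_inter_padRZ {S T : Finset ι} [Fintype ι] (h : Disjoint S T)
    {R : Finset ((↥S → ℤ) × (↥S → ℤ))} {R' : Finset ((↥T → ℤ) × (↥T → ℤ))}
    {r : (ι → ℤ) × (ι → ℤ)} (hr : r ∈ padRZ S R ∩ padRZ T R') : r = (0, 0) := by
  obtain ⟨⟨a, -, rfl⟩, ⟨b, -, hb⟩⟩ := And.imp Finset.mem_image.mp Finset.mem_image.mp
    (Finset.mem_inter.mp hr)
  obtain ⟨hb₁, hb₂⟩ := Prod.ext_iff.mp hb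
  simp [eq_zero_of_padZ_eq_padZ h hb₁.symm, eq_zero_of_padZ_eq_padZ h hb₂.symm]

def padEquiv [Fintype ι] {S₁ S₂ : Finset ι} (hdis : Disjoint S₁ S₂) (hcov : S₁ ∪ S₂ = Finset.univ) :
    (↥S₁ → ℤ) × (↥S₂ → ℤ) ≃ (ι → ℤ) where
  toFun p := padZ S₁ p.1 + padZ S₂ p.2
  invFun x := (projZ S₁ x, projZ S₂ x)
  left_inv p := by
    simp [projZ_padZ_of_disjoint hdis, projZ_padZ_of_disjoint hdis.symm]
  right_inv x := by
    funext i
    have hi : i ∈ S₁ ∪ S₂ := hcov ▸ Finset.mem_univ i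
    rcases Finset.mem_union.mp hi with hi | hi
    · simp [padZ, projZ, hi, Finset.disjoint_left.mp hdis hi]
    · simp [padZ, projZ, hi, Finset.disjoint_right.mp hdis hi]

end Padding

section MasterEquation

variable {σ : Type*}

lemma masterEq_union [DecidableEq ((σ → ℤ) × (σ → ℤ))] {A B : Finset ((σ → ℤ) × (σ → ℤ))}
    {Lam : ((σ → ℤ) × (σ → ℤ)) → (σ → ℤ) → ℝ} {Γ : Set (σ → ℤ)} {π : (σ → ℤ) → ℝ}
    (htriv : ∀ r ∈ A ∩ B, r.1 = r.2) (hA : MasterEq A Lam Γ π) (hB : MasterEq B Lam Γ π) :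
    MasterEq (A ∪ B) Lam Γ π := by
  intro x hx
  have hAB : ∑ r ∈ A ∩ B, π (x + r.1 - r.2) * Lam r (x + r.1 - r.2) =
      π x * ∑ r ∈ A ∩ B, Lam r x := by
    rw [Finset.mul_sum]
    refine Finset.sum_congr rfl fun r hr => ?_
    rw [htriv r hr, add_sub_cancel_right]
  have hlhs := Finset.sum_union_inter (s₁ := A) (s₂ := B)
    (f := fun r => π (x + r.1 - r.2) * Lam r (x + r.1 - r.2))
  have hrhs := Finset.sum_union_inter (s₁ := A) (s₂ := B) (f := fun r => Lam r x)
  linear_combination hlhs + hA x hx + hB x hx - hAB - π x * hrhs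

variable {ι : Type*} [Fintype ι] [DecidableEq ι]

lemma masterEq_padRZ {S T : Finset ι} (hdis : Disjoint T S) {R : Finset ((↥S → ℤ) × (↥S → ℤ))}
    {lam : ((↥S → ℤ) × (↥S → ℤ)) → (↥S → ℤ) → ℝ} {Lam : ((ι → ℤ) × (ι → ℤ)) → (ι → ℤ) → ℝ}
    (hLam : ∀ r ∈ R, ∀ x : ι → ℤ, Lam (padZ S r.1, padZ S r.2) x = lam r (projZ S x))
    {ΓS : Set (↥S → ℤ)} {π : (↥S → ℤ) → ℝ} (hπ : MasterEq R lam ΓS π)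
    (q : (↥T → ℤ) → ℝ) {Γ : Set (ι → ℤ)} (hΓ : ∀ x ∈ Γ, projZ S x ∈ ΓS) :
    MasterEq (padRZ S R) Lam Γ (fun x => π (projZ S x) * q (projZ T x)) := by
  intro x hx
  have hinj : Set.InjOn (fun r : (↥S → ℤ) × (↥S → ℤ) => (padZ S r.1, padZ S r.2)) R :=
    ((padZ_injective S).prodMap (padZ_injective S)).injOn
  rw [padRZ, Finset.sum_image hinj, Finset.sum_image hinj]
  have hfix : ∀ r : (↥S → ℤ) × (↥S → ℤ),
      projZ T (x + padZ S r.1 - padZ S r.2) = projZ T x := fun r => by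
    simp [projZ_padZ_of_disjoint hdis]
  calc ∑ r ∈ R, π (projZ S (x + padZ S r.1 - padZ S r.2)) *
          q (projZ T (x + padZ S r.1 - padZ S r.2)) *
          Lam (padZ S r.1, padZ S r.2) (x + padZ S r.1 - padZ S r.2)
      = q (projZ T x) * ∑ r ∈ R, π (projZ S x + r.1 - r.2) * lam r (projZ S x + r.1 - r.2) := by
        rw [Finset.mul_sum]
        refine Finset.sum_congr rfl fun r hr => ?_
        rw [hfix, hLam r hr]
        simp only [projZ_sub, projZ_add, projZ_padZ]
        ring
    _ = π (projZ S x) * q (projZ T x) * ∑ r ∈ R, Lam (padZ S r.1, padZ S r.2) x := by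
        rw [hπ _ (hΓ x hx), Finset.sum_congr rfl fun r hr => hLam r hr x]
        ring

end MasterEquation

lemma tsum_mul_tsum_eq_one {α β : Type*} {f : α → ℝ} {g : β → ℝ} (hf₀ : 0 ≤ f) (hg₀ : 0 ≤ g)
    (hf : ∑' a, f a = 1) (hg : ∑' b, g b = 1) : ∑' p : α × β, f p.1 * g p.2 = 1 := by
  have hfs : Summable f := by
    by_contra h
    simp [tsum_eq_zero_of_not_summable h] at hf
  have hgs : Summable g := by
    by_contra h
    simp [tsum_eq_zero_of_not_summable h] at hg
  rw [← hfs.tsum_mul_tsum hgs (hfs.mul_of_nonneg hgs hf₀ hg₀), hf, hg, one_mul]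

lemma tsum_prod_component_eq_one {ι : Type*} [Fintype ι] [DecidableEq ι] {S₁ S₂ : Finset ι}
    (hdis : Disjoint S₁ S₂) (hcov : S₁ ∪ S₂ = Finset.univ)
    {Γ₁ : Set (↥S₁ → ℤ)} {Γ₂ : Set (↥S₂ → ℤ)} {π₁ : (↥S₁ → ℤ) → ℝ} {π₂ : (↥S₂ → ℤ) → ℝ}
    (hπ₁ : ∀ z, 0 ≤ π₁ z) (hπ₂ : ∀ z, 0 ≤ π₂ z)
    (hs₁ : ∑' z : Γ₁, π₁ ↑z = 1) (hs₂ : ∑' z : Γ₂, π₂ ↑z = 1) :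
    ∑' z : {x : ι → ℤ | projZ S₁ x ∈ Γ₁ ∧ projZ S₂ x ∈ Γ₂},
      π₁ (projZ S₁ ↑z) * π₂ (projZ S₂ ↑z) = 1 := by
  let e : {x : ι → ℤ | projZ S₁ x ∈ Γ₁ ∧ projZ S₂ x ∈ Γ₂} ≃ ↥Γ₁ × ↥Γ₂ :=
    ((padEquiv hdis hcov).symm.subtypeEquiv fun _ => Iff.rfl).trans (Equiv.Set.prod Γ₁ Γ₂)
  exact (e.tsum_eq fun p => π₁ ↑p.1 * π₂ ↑p.2).trans
    (tsum_mul_tsum_eq_one (f := fun z : Γ₁ => π₁ z) (g := fun z : Γ₂ => π₂ z)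
      (fun z => hπ₁ z) (fun z => hπ₂ z) hs₁ hs₂)

theorem stmt9_general {ι : Type*} [Fintype ι] [DecidableEq ι] (S₁ S₂ : Finset ι)
    (hdis : Disjoint S₁ S₂) (hcov : S₁ ∪ S₂ = Finset.univ)
    (R₁ : Finset ((↥S₁ → ℤ) × (↥S₁ → ℤ))) (R₂ : Finset ((↥S₂ → ℤ) × (↥S₂ → ℤ)))
    (lam₁ : ((↥S₁ → ℤ) × (↥S₁ → ℤ)) → (↥S₁ → ℤ) → ℝ)
    (lam₂ : ((↥S₂ → ℤ) × (↥S₂ → ℤ)) → (↥S₂ → ℤ) → ℝ)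
    (Lam : ((ι → ℤ) × (ι → ℤ)) → (ι → ℤ) → ℝ)
    -- intensities of the union depend only on the coordinates of the reactant's network
    (hLam₁ : ∀ r ∈ R₁, ∀ x : ι → ℤ, Lam (padZ S₁ r.1, padZ S₁ r.2) x = lam₁ r (projZ S₁ x))
    (hLam₂ : ∀ r ∈ R₂, ∀ x : ι → ℤ, Lam (padZ S₂ r.1, padZ S₂ r.2) x = lam₂ r (projZ S₂ x))
    (Γ₁ : Set (↥S₁ → ℤ)) (Γ₂ : Set (↥S₂ → ℤ))
    (π₁ : (↥S₁ → ℤ) → ℝ) (π₂ : (↥S₂ → ℤ) → ℝ)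
    (hπ₁ : IsStationaryDist R₁ lam₁ Γ₁ π₁) (hπ₂ : IsStationaryDist R₂ lam₂ Γ₂ π₂)
    (Γ : Set (ι → ℤ)) (hΓdef : Γ = {x | projZ S₁ x ∈ Γ₁ ∧ projZ S₂ x ∈ Γ₂}) :
    IsStationaryDist (padRZ S₁ R₁ ∪ padRZ S₂ R₂) Lam Γ
      (fun x => π₁ (projZ S₁ x) * π₂ (projZ S₂ x)) ∧
    MasterEq (padRZ S₁ R₁) Lam Γ (fun x => π₁ (projZ S₁ x) * π₂ (projZ S₂ x)) ∧
    MasterEq (padRZ S₂ R₂) Lam Γ (fun x => π₁ (projZ S₁ x) * π₂ (projZ S₂ x)) := by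
  obtain ⟨hnn₁, hz₁, hs₁, hm₁⟩ := hπ₁
  obtain ⟨hnn₂, hz₂, hs₂, hm₂⟩ := hπ₂
  have hmem : ∀ x ∈ Γ, projZ S₁ x ∈ Γ₁ ∧ projZ S₂ x ∈ Γ₂ := fun x hx => by rwa [hΓdef] at hx
  have M₁ := masterEq_padRZ hdis.symm hLam₁ hm₁ π₂ fun x hx => (hmem x hx).1
  have M₂ : MasterEq (padRZ S₂ R₂) Lam Γ (fun x => π₁ (projZ S₁ x) * π₂ (projZ S₂ x)) := by
    simpa only [mul_comm (π₂ _)] using masterEq_padRZ hdis hLam₂ hm₂ π₁ fun x hx => (hmem x hx).2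
  have htriv : ∀ r ∈ padRZ S₁ R₁ ∩ padRZ S₂ R₂, r.1 = r.2 := fun r hr => by
    rw [eq_zero_of_mem_padRZ_inter_padRZ hdis hr]
  refine ⟨⟨fun z => mul_nonneg (hnn₁ _) (hnn₂ _), fun z hz => ?_, ?_, masterEq_union htriv M₁ M₂⟩,
    M₁, M₂⟩
  · rw [hΓdef] at hz
    rcases not_and_or.mp hz with h | h
    · simp [hz₁ _ h]
    · simp [hz₂ _ h]
  · rw [hΓdef]
    exact tsum_prod_component_eq_one hdis hcov hnn₁ hnn₂ hs₁ hs₂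

/-- for a union with disjoint species sets, the product of stationary
distributions on `Γ₁ × Γ₂` is a stationary distribution of the union, generalized
balanced with respect to `{(R₁,R₁),(R₂,R₂)}`. -/
theorem stmt9 {ι : Type*} [Fintype ι] [DecidableEq ι] (S₁ S₂ : Finset ι)
    (hdis : Disjoint S₁ S₂) (hcov : S₁ ∪ S₂ = Finset.univ)
    (R₁ : Finset ((↥S₁ → ℤ) × (↥S₁ → ℤ))) (R₂ : Finset ((↥S₂ → ℤ) × (↥S₂ → ℤ)))
    (hR₁nn : ∀ r ∈ R₁, ∀ i, 0 ≤ r.1 i ∧ 0 ≤ r.2 i)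
    (hR₂nn : ∀ r ∈ R₂, ∀ i, 0 ≤ r.1 i ∧ 0 ≤ r.2 i)
    (lam₁ : ((↥S₁ → ℤ) × (↥S₁ → ℤ)) → (↥S₁ → ℤ) → ℝ)
    (lam₂ : ((↥S₂ → ℤ) × (↥S₂ → ℤ)) → (↥S₂ → ℤ) → ℝ)
    (Lam : ((ι → ℤ) × (ι → ℤ)) → (ι → ℤ) → ℝ)
    -- intensities of the union depend only on the coordinates of the reactant's network
    (hLam₁ : ∀ r ∈ R₁, ∀ x : ι → ℤ, Lam (padZ S₁ r.1, padZ S₁ r.2) x = lam₁ r (projZ S₁ x))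
    (hLam₂ : ∀ r ∈ R₂, ∀ x : ι → ℤ, Lam (padZ S₂ r.1, padZ S₂ r.2) x = lam₂ r (projZ S₂ x))
    (Γ₁ : Set (↥S₁ → ℤ)) (Γ₂ : Set (↥S₂ → ℤ))
    (hΓ₁ : IsIrreducibleComponentZ R₁ Γ₁) (hΓ₂ : IsIrreducibleComponentZ R₂ Γ₂)
    (π₁ : (↥S₁ → ℤ) → ℝ) (π₂ : (↥S₂ → ℤ) → ℝ)
    (hπ₁ : IsStationaryDist R₁ lam₁ Γ₁ π₁) (hπ₂ : IsStationaryDist R₂ lam₂ Γ₂ π₂)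
    (Γ : Set (ι → ℤ)) (hΓdef : Γ = {x | projZ S₁ x ∈ Γ₁ ∧ projZ S₂ x ∈ Γ₂})
    (hΓ : IsIrreducibleComponentZ (padRZ S₁ R₁ ∪ padRZ S₂ R₂) Γ) :
    IsStationaryDist (padRZ S₁ R₁ ∪ padRZ S₂ R₂) Lam Γ
      (fun x => π₁ (projZ S₁ x) * π₂ (projZ S₂ x)) ∧
    MasterEq (padRZ S₁ R₁) Lam Γ (fun x => π₁ (projZ S₁ x) * π₂ (projZ S₂ x)) ∧
    MasterEq (padRZ S₂ R₂) Lam Γ (fun x => π₁ (projZ S₁ x) * π₂ (projZ S₂ x)) :=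
  stmt9_general S₁ S₂ hdis hcov R₁ R₂ lam₁ lam₂ Lam hLam₁ hLam₂ Γ₁ Γ₂ π₁ π₂ hπ₁ hπ₂ Γ hΓdef
end

section
/- Consider the mass-action reaction network G₁ on species S₁, S₂ with reactions S₁ ⇌ S₂ (rates κ₁, κ₂) and 2S₁ ⇌ S₁+S₂ (rates κ₃, κ₄), all rate constants positive. On each irreducible component Γ_N = {(x₁,x₂) ∈ Z_{≥0}² : x₁+x₂ = N}, the distribution π(x₁,x₂) = Z⁻¹ f₁(x₁) f₂(x₂) with f₁(x₁) = (1/x₁!) ∏_{l=1}^{x₁} (κ₂+κ₄(l−1))/(κ₁+κ₃(l−1)) and f₂(x₂) = 1/x₂! satisfies both reaction-vector balance equations π(x₁+1,x₂−1)(x₁+1)(κ₁+κ₃x₁) = π(x₁,x₂) x₂(κ₂+κ₄x₁) and π(x₁−1,x₂+1)(x₂+1)(κ₂+κ₄(x₁−1)) = π(x₁,x₂) x₁(κ₁+κ₃(x₁−1)) for all (x₁,x₂) ∈ Γ_N, and hence is the stationary distribution on Γ_N. -/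
/-!
Both weights satisfy first-order recurrences,
`(m + 1)(κ₁ + κ₃ m) f₁(m + 1) = (κ₂ + κ₄ m) f₁(m)` and `f₂(m) = (m + 1) f₂(m + 1)`,
and multiplying them turns the balance equation for the net change `(-1, +1)` into an identity.
The balance for `(+1, -1)` is the same equation read at the shifted state `(a - 1, b + 1)`
(both sides vanish when `a = 0`), and the master equation is the sum of the two.
Positivity of the rate constants makes every weight positive, so `Z ≠ 0`.
-/

open Finset

noncomputable def productForm (Z : ℝ) (f g : ℕ → ℝ) (a b : ℤ) : ℝ :=
  if 0 ≤ a ∧ 0 ≤ b then Z⁻¹ * f a.toNat * g b.toNat else 0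

namespace productForm

variable {Z : ℝ} {f g : ℕ → ℝ}

@[simp]
theorem natCast (n k : ℕ) : productForm Z f g n k = Z⁻¹ * f n * g k := by
  simp [productForm]

theorem of_neg_left {a : ℤ} (ha : a < 0) (b : ℤ) : productForm Z f g a b = 0 :=
  if_neg fun h => ha.not_ge h.1

theorem of_neg_right (a : ℤ) {b : ℤ} (hb : b < 0) : productForm Z f g a b = 0 :=
  if_neg fun h => hb.not_ge h.2

theorem balance {c d : ℝ → ℝ} (hf : ∀ m : ℕ, (m + 1) * d m * f (m + 1) = c m * f m)
    (hg : ∀ m : ℕ, g m = (m + 1) * g (m + 1)) {a b : ℤ} (ha : 0 ≤ a) (hb : 0 ≤ b) :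
    productForm Z f g (a + 1) (b - 1) * ((a + 1) * d a) = productForm Z f g a b * (b * c a) := by
  lift a to ℕ using ha
  lift b to ℕ using hb
  cases b with
  | zero => simp [of_neg_right _ (show (-1 : ℤ) < 0 by norm_num)]
  | succ k =>
    rw [show (a : ℤ) + 1 = (a + 1 : ℕ) by push_cast; ring,
      show ((k + 1 : ℕ) : ℤ) - 1 = k by push_cast; ring, natCast, natCast]
    push_cast
    linear_combination Z⁻¹ * g k * hf a + Z⁻¹ * c a * f a * hg k

theorem balance_reverse {c d : ℝ → ℝ} (hf : ∀ m : ℕ, (m + 1) * d m * f (m + 1) = c m * f m)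
    (hg : ∀ m : ℕ, g m = (m + 1) * g (m + 1)) {a b : ℤ} (ha : 0 ≤ a) (hb : 0 ≤ b) :
    productForm Z f g (a - 1) (b + 1) * ((b + 1) * c (a - 1)) =
      productForm Z f g a b * (a * d (a - 1)) := by
  rcases ha.eq_or_lt with rfl | ha
  · simp [of_neg_left (show (-1 : ℤ) < 0 by norm_num)]
  · have h := balance (Z := Z) hf hg (a := a - 1) (b := b + 1) (by omega) (by omega)
    push_cast at h
    simpa using h.symm

theorem sum_antidiagonal {N : ℕ} (hZ : Z = ∑ p ∈ range (N + 1), f p * g (N - p)) (hZ₀ : Z ≠ 0) :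
    ∑ p ∈ range (N + 1), productForm Z f g p ((N : ℤ) - p) = 1 := by
  calc ∑ p ∈ range (N + 1), productForm Z f g p ((N : ℤ) - p)
      = ∑ p ∈ range (N + 1), Z⁻¹ * (f p * g (N - p)) := by
        refine sum_congr rfl fun p hp => ?_
        rw [← Nat.cast_sub (Nat.lt_succ_iff.mp (mem_range.mp hp)), natCast, mul_assoc]
    _ = 1 := by rw [← mul_sum, ← hZ, inv_mul_cancel₀ hZ₀]

end productForm

section FactorialWeight

variable {c d : ℝ → ℝ} {f : ℕ → ℝ}

theorem factorial_weight_succ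
    (hf : ∀ m : ℕ, f m = 1 / (m.factorial : ℝ) * ∏ l ∈ range m, c l / d l)
    (m : ℕ) (hd : d m ≠ 0) : (m + 1) * d m * f (m + 1) = c m * f m := by
  rw [hf, hf, prod_range_succ, Nat.factorial_succ]
  push_cast
  field_simp

theorem factorial_weight_pos
    (hf : ∀ m : ℕ, f m = 1 / (m.factorial : ℝ) * ∏ l ∈ range m, c l / d l)
    (hc : ∀ l : ℕ, 0 < c l) (hd : ∀ l : ℕ, 0 < d l) (m : ℕ) : 0 < f m := by
  rw [hf]
  exact mul_pos (by positivity) (prod_pos fun l _ => div_pos (hc l) (hd l))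

end FactorialWeight

theorem one_div_factorial_eq_succ_mul (m : ℕ) :
    1 / (m.factorial : ℝ) = (m + 1) * (1 / ((m + 1).factorial : ℝ)) := by
  rw [Nat.factorial_succ]
  push_cast
  field_simp

/-- for the mass-action network `S₁ ⇌ S₂`, `2S₁ ⇌ S₁+S₂`, the product-form
distribution with `f₁(x₁) = (1/x₁!) ∏_{l=1}^{x₁} (κ₂+κ₄(l-1))/(κ₁+κ₃(l-1))` and
`f₂(x₂) = 1/x₂!` satisfies both reaction-vector balance equations on
`Γ_N = {x₁ + x₂ = N}` and hence the master equation, so it is the stationary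
distribution on `Γ_N`. -/
theorem stmt13 (κ₁ κ₂ κ₃ κ₄ : ℝ) (h₁ : 0 < κ₁) (h₂ : 0 < κ₂) (h₃ : 0 < κ₃) (h₄ : 0 < κ₄)
    (N : ℕ)
    (f₁ f₂ : ℕ → ℝ)
    (hf₁ : ∀ m : ℕ, f₁ m = (1 / (m.factorial : ℝ)) *
      ∏ l ∈ Finset.range m, (κ₂ + κ₄ * l) / (κ₁ + κ₃ * l))
    (hf₂ : ∀ m : ℕ, f₂ m = 1 / (m.factorial : ℝ))
    (Z : ℝ) (hZ : Z = ∑ p ∈ Finset.range (N + 1), f₁ p * f₂ (N - p))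
    (π : ℤ → ℤ → ℝ)
    (hπ : ∀ a b : ℤ, π a b =
      if 0 ≤ a ∧ 0 ≤ b then Z⁻¹ * f₁ a.toNat * f₂ b.toNat else 0) :
    (∀ a b : ℤ, 0 ≤ a → 0 ≤ b → a + b = (N : ℤ) →
      -- reaction-vector balance for the net change (-1, +1)
      (π (a + 1) (b - 1) * (((a : ℝ) + 1) * (κ₁ + κ₃ * a)) =
        π a b * ((b : ℝ) * (κ₂ + κ₄ * a))) ∧
      -- reaction-vector balance for the net change (+1, -1)
      (π (a - 1) (b + 1) * (((b : ℝ) + 1) * (κ₂ + κ₄ * ((a : ℝ) - 1))) =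
        π a b * ((a : ℝ) * (κ₁ + κ₃ * ((a : ℝ) - 1)))) ∧
      -- hence the master equation holds at (a, b)
      (π (a + 1) (b - 1) * (κ₁ * ((a : ℝ) + 1) + κ₃ * (((a : ℝ) + 1) * a)) +
        π (a - 1) (b + 1) * (κ₂ * ((b : ℝ) + 1) + κ₄ * (((a : ℝ) - 1) * ((b : ℝ) + 1))) =
        π a b * (κ₁ * a + κ₃ * ((a : ℝ) * ((a : ℝ) - 1)) + κ₂ * b + κ₄ * ((a : ℝ) * b)))) ∧
    -- π is a probability distribution on Γ_N
    (∑ p ∈ Finset.range (N + 1), π p ((N : ℤ) - p)) = 1 := by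
  obtain rfl : π = productForm Z f₁ f₂ := funext fun a => funext (hπ a)
  set c : ℝ → ℝ := fun x => κ₂ + κ₄ * x
  set d : ℝ → ℝ := fun x => κ₁ + κ₃ * x
  have hc (l : ℕ) : 0 < c l := by positivity
  have hd (l : ℕ) : 0 < d l := by positivity
  have hf₁_succ (m : ℕ) := factorial_weight_succ (c := c) (d := d) hf₁ m (hd m).ne'
  have hf₂_succ (m : ℕ) : f₂ m = (m + 1) * f₂ (m + 1) := by
    rw [hf₂, hf₂]; exact one_div_factorial_eq_succ_mul m
  have hZ₀ : 0 < Z := hZ ▸ sum_pos (fun p _ =>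
      mul_pos (factorial_weight_pos (c := c) (d := d) hf₁ hc hd p) (by rw [hf₂]; positivity))
    nonempty_range_add_one
  refine ⟨fun a b ha hb _ => ?_, productForm.sum_antidiagonal hZ hZ₀.ne'⟩
  have forward := productForm.balance (Z := Z) hf₁_succ hf₂_succ ha hb
  have backward := productForm.balance_reverse (Z := Z) hf₁_succ hf₂_succ ha hb
  exact ⟨forward, backward, by linear_combination forward + backward⟩
end

section
/- Consider the mass-action network G₁ with reactions S₁ ⇌ S₂ (rates κ₁,κ₂) and 2S₁ ⇌ S₁+S₂ (rates κ₃,κ₄), joined with G₂: ∅ ⇌ S₂ (rates κ₊, κ₋). With c₂ = κ₊/κ₋, the unnormalized product measure μ(x₁,x₂) = [c₂^{x₁}/x₁! · ∏_{l=1}^{x₁}(κ₂+κ₄(l−1))/(κ₁+κ₃(l−1))] · [c₂^{x₂}/x₂!] is summable over Z_{≥0}² for all positive rate constants, and its normalization is a stationary distribution for the joined network G₁ ∪ G₂ on Z_{≥0}². -/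
/-!
The measure is a product `f(x₁) g(x₂)` with `g(y) = c₂^y / y!` and
`f(x+1) (x+1)(κ₁ + κ₃x) = c₂ (κ₂ + κ₄x) f(x)`. Since `g(y+1) (y+1) = c₂ g(y)` and `c₂ κ₋ = κ₊`,
the fluxes of `∅ ⇌ S₂` are in detailed balance; with the recursion for `f`, so are the fluxes of
`S₁ ⇌ S₂` and `2S₁ ⇌ S₁ + S₂` taken together, as both reactions move the state along `(-1, 1)`.
Adding up the balanced fluxes into and out of a state gives the master equation; extending by
zero off the quadrant is harmless because every flux across the boundary has a vanishing
propensity. Summability follows from `f(x) ≤ (c₂ r)^x / x!` with `r = κ₂/κ₁ + κ₄/κ₃`.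
-/

open Finset

noncomputable section

def poissonWeight (c : ℝ) (n : ℕ) : ℝ := c ^ n / (n.factorial : ℝ)

def conversionWeight (κ₁ κ₂ κ₃ κ₄ c : ℝ) (n : ℕ) : ℝ :=
  poissonWeight c n * ∏ l ∈ range n, (κ₂ + κ₄ * l) / (κ₁ + κ₃ * l)

def extendByZero (ρ : ℕ → ℕ → ℝ) (a b : ℤ) : ℝ :=
  if 0 ≤ a ∧ 0 ≤ b then ρ a.toNat b.toNat else 0

end

section Weights

variable {κ₁ κ₂ κ₃ κ₄ c : ℝ}

theorem poissonWeight_nonneg (hc : 0 ≤ c) (n : ℕ) : 0 ≤ poissonWeight c n := by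
  unfold poissonWeight; positivity

theorem summable_poissonWeight (c : ℝ) : Summable (poissonWeight c) :=
  Real.summable_pow_div_factorial c

theorem poissonWeight_succ_mul (c : ℝ) (n : ℕ) :
    poissonWeight c (n + 1) * (n + 1) = poissonWeight c n * c := by
  simp only [poissonWeight, Nat.factorial_succ, Nat.cast_mul, Nat.cast_succ, pow_succ]
  field_simp

theorem conversionWeight_nonneg (h₁ : 0 < κ₁) (h₂ : 0 ≤ κ₂) (h₃ : 0 ≤ κ₃) (h₄ : 0 ≤ κ₄)
    (hc : 0 ≤ c) (n : ℕ) : 0 ≤ conversionWeight κ₁ κ₂ κ₃ κ₄ c n :=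
  mul_nonneg (poissonWeight_nonneg hc n) (prod_nonneg fun _ _ => by positivity)

theorem conversionWeight_succ_mul (n : ℕ) (hn : κ₁ + κ₃ * n ≠ 0) :
    conversionWeight κ₁ κ₂ κ₃ κ₄ c (n + 1) * ((n + 1) * (κ₁ + κ₃ * n)) =
      conversionWeight κ₁ κ₂ κ₃ κ₄ c n * (c * (κ₂ + κ₄ * n)) := by
  unfold conversionWeight
  rw [prod_range_succ]
  set P := ∏ l ∈ range n, (κ₂ + κ₄ * l) / (κ₁ + κ₃ * l)
  have hq : (κ₂ + κ₄ * n) / (κ₁ + κ₃ * n) * (κ₁ + κ₃ * n) = κ₂ + κ₄ * n := div_mul_cancel₀ _ hn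
  linear_combination P * (κ₂ + κ₄ * n) * poissonWeight_succ_mul c n +
    poissonWeight c (n + 1) * (n + 1) * P * hq

theorem add_mul_div_add_mul_le_div_add_div (h₁ : 0 < κ₁) (h₂ : 0 ≤ κ₂) (h₃ : 0 < κ₃) (h₄ : 0 ≤ κ₄)
    {t : ℝ} (ht : 0 ≤ t) : (κ₂ + κ₄ * t) / (κ₁ + κ₃ * t) ≤ κ₂ / κ₁ + κ₄ / κ₃ := by
  rw [add_div]
  apply add_le_add
  · exact div_le_div_of_nonneg_left h₂ h₁ (by nlinarith)
  · rw [div_le_div_iff₀ (by positivity) h₃]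
    nlinarith

theorem conversionWeight_le_poissonWeight (h₁ : 0 < κ₁) (h₂ : 0 ≤ κ₂) (h₃ : 0 < κ₃)
    (h₄ : 0 ≤ κ₄) (hc : 0 ≤ c) (n : ℕ) :
    conversionWeight κ₁ κ₂ κ₃ κ₄ c n ≤ poissonWeight (c * (κ₂ / κ₁ + κ₄ / κ₃)) n := by
  calc conversionWeight κ₁ κ₂ κ₃ κ₄ c n
      ≤ poissonWeight c n * ∏ _l ∈ range n, (κ₂ / κ₁ + κ₄ / κ₃) := by
        refine mul_le_mul_of_nonneg_left (prod_le_prod (fun _ _ => by positivity) fun l _ => ?_)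
          (poissonWeight_nonneg hc n)
        exact add_mul_div_add_mul_le_div_add_div h₁ h₂ h₃ h₄ l.cast_nonneg
    _ = poissonWeight (c * (κ₂ / κ₁ + κ₄ / κ₃)) n := by
        simp only [poissonWeight, prod_const, card_range, mul_pow]
        ring

theorem summable_conversionWeight (h₁ : 0 < κ₁) (h₂ : 0 ≤ κ₂) (h₃ : 0 < κ₃) (h₄ : 0 ≤ κ₄)
    (hc : 0 ≤ c) : Summable (conversionWeight κ₁ κ₂ κ₃ κ₄ c) :=
  (summable_poissonWeight _).of_nonneg_of_le (conversionWeight_nonneg h₁ h₂ h₃.le h₄ hc)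
    (conversionWeight_le_poissonWeight h₁ h₂ h₃ h₄ hc)

theorem conversion_detailed_balance (h₁ : 0 < κ₁) (h₃ : 0 ≤ κ₃) (x y : ℕ) :
    conversionWeight κ₁ κ₂ κ₃ κ₄ c (x + 1) * poissonWeight c y * ((x + 1) * (κ₁ + κ₃ * x)) =
      conversionWeight κ₁ κ₂ κ₃ κ₄ c x * poissonWeight c (y + 1) * ((y + 1) * (κ₂ + κ₄ * x)) := by
  have hx : κ₁ + κ₃ * x ≠ 0 := by positivity
  have hf := conversionWeight_succ_mul (κ₂ := κ₂) (κ₄ := κ₄) (c := c) x hx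
  linear_combination poissonWeight c y * hf -
    conversionWeight κ₁ κ₂ κ₃ κ₄ c x * (κ₂ + κ₄ * x) * poissonWeight_succ_mul c y

theorem poissonWeight_birth_death_balance {κp κm : ℝ} (hc : c * κm = κp) (y : ℕ) :
    poissonWeight c (y + 1) * ((y + 1) * κm) = poissonWeight c y * κp := by
  linear_combination κm * poissonWeight_succ_mul c y + poissonWeight c y * hc

end Weights

section ExtendByZero

variable {ρ : ℕ → ℕ → ℝ}

@[simp]
theorem extendByZero_natCast (x y : ℕ) : extendByZero ρ x y = ρ x y := by
  simp [extendByZero]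

theorem extendByZero_of_neg_left {a : ℤ} (ha : a < 0) (b : ℤ) : extendByZero ρ a b = 0 := by
  simp [extendByZero, ha.not_ge]

theorem extendByZero_of_neg_right (a : ℤ) {b : ℤ} (hb : b < 0) : extendByZero ρ a b = 0 := by
  simp [extendByZero, hb.not_ge]

variable {κ₁ κ₂ κ₃ κ₄ κp κm : ℝ}

theorem extendByZero_conversion_balance
    (h : ∀ x y : ℕ, ρ (x + 1) y * ((x + 1) * (κ₁ + κ₃ * x)) =
      ρ x (y + 1) * ((y + 1) * (κ₂ + κ₄ * x))) (a b : ℤ) :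
    extendByZero ρ (a + 1) b * ((a + 1) * (κ₁ + κ₃ * a)) =
      extendByZero ρ a (b + 1) * ((b + 1) * (κ₂ + κ₄ * a)) := by
  rcases lt_trichotomy a (-1) with ha | rfl | ha
  · rw [extendByZero_of_neg_left (by omega), extendByZero_of_neg_left (by omega)]
    simp
  · simp [extendByZero_of_neg_left]
  lift a to ℕ using (by omega)
  rcases lt_trichotomy b (-1) with hb | rfl | hb
  · rw [extendByZero_of_neg_right _ (by omega), extendByZero_of_neg_right _ (by omega)]
    simp
  · simp [extendByZero_of_neg_right]
  lift b to ℕ using (by omega)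
  exact_mod_cast h a b

theorem extendByZero_inflow_balance (h : ∀ x y : ℕ, ρ x (y + 1) * ((y + 1) * κm) = ρ x y * κp)
    (a b : ℤ) : extendByZero ρ a (b + 1) * ((b + 1) * κm) = extendByZero ρ a b * κp := by
  rcases lt_or_ge a 0 with ha | ha
  · simp [extendByZero_of_neg_left ha]
  lift a to ℕ using ha
  rcases lt_trichotomy b (-1) with hb | rfl | hb
  · rw [extendByZero_of_neg_right _ (by omega), extendByZero_of_neg_right _ (by omega)]
    simp
  · simp [extendByZero_of_neg_right]
  lift b to ℕ using (by omega)
  exact_mod_cast h a b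

end ExtendByZero

theorem master_equation_of_balance {κ₁ κ₂ κ₃ κ₄ κp κm : ℝ} {π : ℤ → ℤ → ℝ}
    (hconv : ∀ a b : ℤ, π (a + 1) b * ((a + 1) * (κ₁ + κ₃ * a)) =
      π a (b + 1) * ((b + 1) * (κ₂ + κ₄ * a)))
    (hinflow : ∀ a b : ℤ, π a (b + 1) * ((b + 1) * κm) = π a b * κp) (a b : ℤ) :
    π (a + 1) (b - 1) * (κ₁ * ((a : ℝ) + 1) + κ₃ * (((a : ℝ) + 1) * a)) +
      π (a - 1) (b + 1) * (κ₂ * ((b : ℝ) + 1) + κ₄ * (((a : ℝ) - 1) * ((b : ℝ) + 1))) +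
      π a (b - 1) * κp +
      π a (b + 1) * (κm * ((b : ℝ) + 1)) =
      π a b * (κ₁ * a + κ₃ * ((a : ℝ) * ((a : ℝ) - 1)) + κ₂ * b + κ₄ * ((a : ℝ) * b) +
        κp + κm * b) := by
  have e₁ := hconv a (b - 1)
  have e₂ := hconv (a - 1) b
  have e₃ := hinflow a (b - 1)
  have e₄ := hinflow a b
  simp only [sub_add_cancel, Int.cast_sub, Int.cast_one] at e₁ e₂ e₃
  linear_combination e₁ - e₂ - e₃ + e₄

/-- for the join of `S₁ ⇌ S₂`, `2S₁ ⇌ S₁+S₂` with `∅ ⇌ S₂`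
(rates `κ₊, κ₋`, `c₂ = κ₊/κ₋`), the unnormalized product measure
`μ(x₁,x₂) = [c₂^{x₁}/x₁! ∏_{l=1}^{x₁}(κ₂+κ₄(l-1))/(κ₁+κ₃(l-1))]·[c₂^{x₂}/x₂!]`
is summable over `ℤ_{≥0}²`, and its normalization is a stationary distribution of the
joined network on `ℤ_{≥0}²` (it is a probability and satisfies the master equation). -/
theorem stmt15 (κ₁ κ₂ κ₃ κ₄ κp κm : ℝ)
    (h₁ : 0 < κ₁) (h₂ : 0 < κ₂) (h₃ : 0 < κ₃) (h₄ : 0 < κ₄)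
    (hp : 0 < κp) (hm : 0 < κm)
    (c₂ : ℝ) (hc₂ : c₂ = κp / κm)
    (μ : ℕ × ℕ → ℝ)
    (hμ : ∀ p : ℕ × ℕ, μ p =
      (c₂ ^ p.1 / (p.1.factorial : ℝ) *
        ∏ l ∈ Finset.range p.1, (κ₂ + κ₄ * l) / (κ₁ + κ₃ * l)) *
      (c₂ ^ p.2 / (p.2.factorial : ℝ)))
    (π : ℤ → ℤ → ℝ)
    (hπ : ∀ a b : ℤ, π a b =
      if 0 ≤ a ∧ 0 ≤ b then μ (a.toNat, b.toNat) / (∑' p : ℕ × ℕ, μ p) else 0) :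
    -- summability over the state space
    Summable μ ∧
    -- normalization: π is a probability distribution
    (∑' p : ℕ × ℕ, π p.1 p.2) = 1 ∧
    -- the master equation holds at every state of ℤ_{≥0}²
    (∀ a b : ℤ, 0 ≤ a → 0 ≤ b →
      π (a + 1) (b - 1) * (κ₁ * ((a : ℝ) + 1) + κ₃ * (((a : ℝ) + 1) * a)) +
      π (a - 1) (b + 1) * (κ₂ * ((b : ℝ) + 1) + κ₄ * (((a : ℝ) - 1) * ((b : ℝ) + 1))) +
      π a (b - 1) * κp +
      π a (b + 1) * (κm * ((b : ℝ) + 1)) =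
      π a b * (κ₁ * a + κ₃ * ((a : ℝ) * ((a : ℝ) - 1)) + κ₂ * b + κ₄ * ((a : ℝ) * b) +
        κp + κm * b)) := by
  have hc : 0 ≤ c₂ := hc₂ ▸ by positivity
  have hμ' : ∀ x y, μ (x, y) = conversionWeight κ₁ κ₂ κ₃ κ₄ c₂ x * poissonWeight c₂ y :=
    fun x y => hμ (x, y)
  have hμ_nonneg : ∀ p, 0 ≤ μ p := fun p => hμ' p.1 p.2 ▸
    mul_nonneg (conversionWeight_nonneg h₁ h₂.le h₃.le h₄.le hc p.1) (poissonWeight_nonneg hc p.2)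
  have hsum : Summable μ := by
    rw [show μ = _ from funext hμ]
    exact (summable_conversionWeight h₁ h₂.le h₃ h₄.le hc).mul_of_nonneg
      (summable_poissonWeight c₂) (conversionWeight_nonneg h₁ h₂.le h₃.le h₄.le hc)
      (poissonWeight_nonneg hc)
  set S := ∑' p, μ p
  have hS : S ≠ 0 :=
    (hsum.tsum_pos hμ_nonneg (0, 0) (by simp [hμ', conversionWeight, poissonWeight])).ne'
  have hπ_eq : π = extendByZero fun x y => μ (x, y) / S := funext₂ hπ
  have hcκ : c₂ * κm = κp := by rw [hc₂, div_mul_cancel₀ κp hm.ne']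
  refine ⟨hsum, ?_, fun a b _ _ => ?_⟩
  · simp only [hπ_eq, extendByZero_natCast, Prod.mk.eta, tsum_div_const]
    exact div_self hS
  rw [hπ_eq]
  refine master_equation_of_balance (extendByZero_conversion_balance fun x y => ?_)
    (extendByZero_inflow_balance fun x y => ?_) a b
  · simp only [hμ']
    linear_combination conversion_detailed_balance (κ₂ := κ₂) (κ₄ := κ₄) (c := c₂) h₁ h₃.le x y / S
  · simp only [hμ']
    linear_combination conversionWeight κ₁ κ₂ κ₃ κ₄ c₂ x *
      poissonWeight_birth_death_balance hcκ y / S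
end
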